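/- arXiv:1304.2193 — 4 statements merged into one kernel-verified Lean document; each statement's English description precedes it below -/
import Mathlib

section
/- Let G be a countable group acting by homeomorphisms on a nonempty compact metrizable space X, and let Inv denote the set of G-invariant Borel probability measures on X. A measure μ ∈ Inv is an extreme point of Inv if and only if μ is ergodic, i.e. every Borel set s ⊆ X with g⁻¹ • s = s for all g ∈ G satisfies μ(s) = 0 or μ(s) = 1. -/
open MeasureTheory
open scoped ENNReal

/-!
An invariant set `s` with `0 < μ s < 1` splits `μ = μ s • μ[|s] + μ sᶜ • μ[|sᶜ]` into two distinct
invariant probability measures. Conversely, if `μ` is ergodic and `μ = t • ν₁ + (1 - t) • ν₂`,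
then each `νᵢ` is invariant and `νᵢ ≪ μ`, so its Radon–Nikodym density is a.e. invariant, hence
a.e. constant, hence `νᵢ = μ`. Countability of `G` is what lets strictly invariant sets suffice:
for an a.e.-invariant `s`, the set `⋂ g, (g • ·) ⁻¹' s` is strictly invariant and a.e. equal to `s`.
-/

section

open Filter Set ProbabilityTheory

variable {G X : Type*} [MeasurableSpace X] {μ ν : Measure X}

theorem eventuallyConst_ae_iff_measure_eq_zero_or_one [IsProbabilityMeasure μ] {s : Set X}
    (hs : MeasurableSet s) : EventuallyConst s (ae μ) ↔ μ s = 0 ∨ μ s = 1 := by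
  rw [eventuallyConst_set', ae_eq_empty, ae_eq_univ, prob_compl_eq_zero_iff hs]

theorem smul_cond_add_smul_cond_compl [IsFiniteMeasure μ] {s : Set X} (hs : MeasurableSet s) :
    μ s • μ[|s] + μ sᶜ • μ[|sᶜ] = μ := by
  ext t ht
  simp only [Measure.add_apply, Measure.smul_apply, smul_eq_mul]
  rw [mul_comm, mul_comm (μ sᶜ), cond_add_cond_compl_eq hs]

theorem cond_ne_cond_compl [IsFiniteMeasure μ] {s : Set X} (hs : MeasurableSet s)
    (hμs : μ s ≠ 0) : μ[|s] ≠ μ[|sᶜ] := fun h ↦ by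
  simpa [cond_apply hs.compl, hμs] using congrArg (· s) h

section SMul

variable [SMul G X]

theorem ErgodicSMul.ae_eq_const_of_ae_eq_comp {Y : Type*} [Nonempty Y] [MeasurableSpace Y]
    [MeasurableSpace.CountablySeparated Y] [ErgodicSMul G X μ] {f : X → Y}
    (hf : NullMeasurable f μ) (hinv : ∀ g : G, f ∘ (g • ·) =ᵐ[μ] f) :
    ∃ c, f =ᵐ[μ] Function.const X c :=
  exists_eventuallyEq_const_of_forall_separating MeasurableSet fun U hU ↦
    eventuallyConst_set.mp <| MeasureTheory.aeconst_of_forall_preimage_smul_ae_eq G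
      (s := f ⁻¹' U) (hf hU) fun g ↦
        ((hinv g).mono fun _ hx ↦ Iff.of_eq (congrArg (· ∈ U) hx)).set_eq

theorem smulInvariantMeasure_restrict [SMulInvariantMeasure G X μ] {s : Set X}
    (hsm : MeasurableSet s) (hs : ∀ g : G, (g • ·) ⁻¹' s = s) :
    SMulInvariantMeasure G X (μ.restrict s) :=
  ⟨fun g t ht ↦ by
    rw [Measure.restrict_apply' hsm, Measure.restrict_apply' hsm, ← hs g, ← preimage_inter, hs g,
      SMulInvariantMeasure.measure_preimage_smul g (ht.inter hsm)]⟩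

theorem smulInvariantMeasure_cond [SMulInvariantMeasure G X μ] {s : Set X}
    (hsm : MeasurableSet s) (hs : ∀ g : G, (g • ·) ⁻¹' s = s) : SMulInvariantMeasure G X μ[|s] := by
  have := smulInvariantMeasure_restrict (μ := μ) hsm hs
  exact SMulInvariantMeasure.smul _

theorem exists_smulInvariant_decomposition_of_invariant_set [IsProbabilityMeasure μ]
    [SMulInvariantMeasure G X μ] {s : Set X} (hs : MeasurableSet s)
    (hs_inv : ∀ g : G, (g • ·) ⁻¹' s = s) (hμs₀ : μ s ≠ 0) (hμs₁ : μ s ≠ 1) :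
    ∃ ν₁ ν₂ : Measure X, (IsProbabilityMeasure ν₁ ∧ SMulInvariantMeasure G X ν₁) ∧
      (IsProbabilityMeasure ν₂ ∧ SMulInvariantMeasure G X ν₂) ∧ ν₁ ≠ ν₂ ∧
      μ = μ s • ν₁ + (1 - μ s) • ν₂ := by
  have hμsc : μ sᶜ ≠ 0 := by rwa [Ne, prob_compl_eq_zero_iff hs]
  refine ⟨μ[|s], μ[|sᶜ], ⟨cond_isProbabilityMeasure hμs₀, smulInvariantMeasure_cond hs hs_inv⟩,
    ⟨cond_isProbabilityMeasure hμsc, smulInvariantMeasure_cond hs.compl fun g ↦ ?_⟩,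
    cond_ne_cond_compl hs hμs₀, ?_⟩
  · rw [preimage_compl, hs_inv]
  · rw [← prob_compl_eq_one_sub hs, smul_cond_add_smul_cond_compl hs]

variable [MeasurableConstSMul G X]

theorem ErgodicSMul.eq_of_absolutelyContinuous [IsProbabilityMeasure μ] [IsProbabilityMeasure ν]
    [ErgodicSMul G X μ] [SMulInvariantMeasure G X ν] (hνμ : ν ≪ μ) : ν = μ := by
  obtain ⟨c, hc⟩ := ErgodicSMul.ae_eq_const_of_ae_eq_comp (G := G) (μ := μ)
    (Measure.measurable_rnDeriv ν μ).nullMeasurable fun g ↦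
      (measurePreserving_smul g ν).rnDeriv_comp_aeEq (measurePreserving_smul g μ)
  have hν : ∀ s, MeasurableSet s → ν s = c * μ s := fun s hs ↦ by
    rw [← Measure.setLIntegral_rnDeriv hνμ, setLIntegral_congr_fun_ae hs (hc.mono fun x hx _ ↦ hx)]
    simp
  have hc1 : c = 1 := by simpa using (hν univ MeasurableSet.univ).symm
  ext s hs
  rw [hν s hs, hc1, one_mul]

end SMul

theorem ErgodicSMul.of_forall_preimage_smul_eq [Group G] [Countable G] [MulAction G X]
    [MeasurableConstSMul G X] [SMulInvariantMeasure G X μ]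
    (h : ∀ s, MeasurableSet s → (∀ g : G, (g • ·) ⁻¹' s = s) → EventuallyConst s (ae μ)) :
    ErgodicSMul G X μ := by
  refine ⟨fun {s} hs hinv ↦ ?_⟩
  set S := ⋂ g : G, (g • ·) ⁻¹' s
  have hS_inv : ∀ h : G, (h • ·) ⁻¹' S = S := fun h ↦ by
    simp only [S, preimage_iInter, preimage_preimage, smul_smul]
    exact (Equiv.mulRight h).surjective.iInter_comp fun g ↦ (g • ·) ⁻¹' s
  have hS_ae : S =ᵐ[μ] s := by
    simpa only [iInter_const] using Filter.EventuallyEq.countable_iInter hinv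
  exact (h S (.iInter fun g ↦ measurable_const_smul g hs) hS_inv).congr hS_ae

end

theorem extreme_iff_ergodic_general {G X : Type*} [Group G] [Countable G]
    [TopologicalSpace X] [MeasurableSpace X] [BorelSpace X] [MulAction G X]
    (hcont : ∀ g : G, Continuous fun x : X => g • x)
    (Inv : Set (Measure X))
    (hInv : Inv = {μ : Measure X | IsProbabilityMeasure μ ∧
      ∀ g : G, Measure.map (fun x : X => g • x) μ = μ})
    (μ : Measure X) (hμ : μ ∈ Inv) :
    (∀ ν₁ ∈ Inv, ∀ ν₂ ∈ Inv, ∀ t : ℝ≥0∞, 0 < t → t < 1 →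
        μ = t • ν₁ + (1 - t) • ν₂ → ν₁ = ν₂) ↔
      (∀ s : Set X, MeasurableSet s → (∀ g : G, (fun x : X => g • x) ⁻¹' s = s) →
        μ s = 0 ∨ μ s = 1) := by
  have : MeasurableConstSMul G X := ⟨fun g ↦ (hcont g).measurable⟩
  have hInv' : Inv = {ν | IsProbabilityMeasure ν ∧ SMulInvariantMeasure G X ν} := by
    simp only [hInv, (smulInvariantMeasure_tfae G _).out 5 0]
  subst hInv'
  obtain ⟨hμp, hμinv⟩ := hμ
  constructor
  · intro hext s hs hs_inv
    by_contra! hμs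
    obtain ⟨ν₁, ν₂, hν₁, hν₂, hne, hμ_eq⟩ :=
      exists_smulInvariant_decomposition_of_invariant_set hs hs_inv hμs.1 hμs.2
    exact hne (hext ν₁ hν₁ ν₂ hν₂ _ (pos_iff_ne_zero.2 hμs.1) (prob_le_one.lt_of_ne hμs.2) hμ_eq)
  · intro herg
    have : ErgodicSMul G X μ := .of_forall_preimage_smul_eq fun s hs hs_inv ↦
      (eventuallyConst_ae_iff_measure_eq_zero_or_one hs).2 (herg s hs hs_inv)
    rintro ν₁ ⟨_, _⟩ ν₂ ⟨_, _⟩ t ht0 ht1 hμ_eq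
    have hν₁ : ν₁ ≪ μ := hμ_eq ▸ (Measure.absolutelyContinuous_smul ht0.ne').add_right _
    have hν₂ : ν₂ ≪ μ :=
      hμ_eq ▸ (Measure.absolutelyContinuous_smul (tsub_pos_of_lt ht1).ne').add_right' _
    rw [ErgodicSMul.eq_of_absolutelyContinuous (G := G) hν₁,
      ErgodicSMul.eq_of_absolutelyContinuous (G := G) hν₂]

/-- For a countable group `G` acting by homeomorphisms on a nonempty compact metrizable
space `X`, a `G`-invariant Borel probability measure `μ` is an extreme point of the
convex set of invariant probability measures (i.e. it is not a proper convex combination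
of two distinct invariant probability measures) if and only if it is ergodic: every
Borel set `s` with `(g • ·) ⁻¹' s = s` for all `g` has measure `0` or `1`. -/
theorem extreme_iff_ergodic {G X : Type*} [Group G] [Countable G]
    [TopologicalSpace X] [CompactSpace X] [TopologicalSpace.MetrizableSpace X] [Nonempty X]
    [MeasurableSpace X] [BorelSpace X] [MulAction G X]
    (hcont : ∀ g : G, Continuous fun x : X => g • x)
    (Inv : Set (Measure X))
    (hInv : Inv = {μ : Measure X | IsProbabilityMeasure μ ∧
      ∀ g : G, Measure.map (fun x : X => g • x) μ = μ})
    (μ : Measure X) (hμ : μ ∈ Inv) :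
    (∀ ν₁ ∈ Inv, ∀ ν₂ ∈ Inv, ∀ t : ℝ≥0∞, 0 < t → t < 1 →
        μ = t • ν₁ + (1 - t) • ν₂ → ν₁ = ν₂) ↔
      (∀ s : Set X, MeasurableSet s → (∀ g : G, (fun x : X => g • x) ⁻¹' s = s) →
        μ s = 0 ∨ μ s = 1) :=
  extreme_iff_ergodic_general hcont Inv hInv μ hμ
end

section
/- Let X = ∏_{n ∈ ℕ} ℤ/2ℤ, a compact abelian topological group under pointwise addition, with Haar probability measure ν. Then ν is ergodic for the group of finitely supported translations: every Borel set s ⊆ X such that (x ↦ x + e)⁻¹(s) = s for every finitely supported e : ℕ → ℤ/2ℤ satisfies ν(s) = 0 or ν(s) = 1. -/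
open MeasureTheory ENNReal

/-- Cylinder set fixing the first `k` coordinates. -/
def cylZ (k : ℕ) (a : Fin k → ZMod 2) : Set (ℕ → ZMod 2) :=
  {x | ∀ i : Fin k, x i = a i}

lemma cylZ_measurable (k : ℕ) (a : Fin k → ZMod 2) : MeasurableSet (cylZ k a) := by
  have : cylZ k a = ⋂ i : Fin k, (fun x : ℕ → ZMod 2 => x i) ⁻¹' {a i} := by
    ext x; simp [cylZ]
  rw [this]
  exact MeasurableSet.iInter fun i => (measurable_pi_apply (i : ℕ)) (measurableSet_singleton _)

lemma cylZ_preimage (k : ℕ) (a b : Fin k → ZMod 2) :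
    (fun x : ℕ → ZMod 2 => x + fun n => if h : n < k then a ⟨n, h⟩ - b ⟨n, h⟩ else 0) ⁻¹' cylZ k a
      = cylZ k b := by
  ext x
  simp only [Set.mem_preimage, cylZ, Set.mem_setOf_eq, Pi.add_apply]
  constructor
  · intro h i
    have h1 := h i
    rw [dif_pos i.isLt] at h1
    have h2 : x i + (a i - b i) = a i := by simpa using h1
    linear_combination h2
  · intro h i
    rw [dif_pos i.isLt]
    have : (⟨(i : ℕ), i.isLt⟩ : Fin k) = i := by simp
    rw [this, h i]
    ring

lemma cylZ_support (k : ℕ) (a b : Fin k → ZMod 2) :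
    (Function.support fun n => if h : n < k then a ⟨n, h⟩ - b ⟨n, h⟩ else 0).Finite := by
  apply Set.Finite.subset (Set.finite_Iio k)
  intro n hn
  simp only [Function.mem_support] at hn
  by_contra hk
  simp only [Set.mem_Iio] at hk
  rw [dif_neg hk] at hn
  exact hn rfl

lemma cylZ_iUnion (k : ℕ) : ⋃ a : Fin k → ZMod 2, cylZ k a = Set.univ := by
  ext x
  simp only [Set.mem_iUnion, Set.mem_univ, iff_true]
  exact ⟨fun i => x i, fun i => rfl⟩

lemma cylZ_disjoint (k : ℕ) : Pairwise (Function.onFun Disjoint fun a : Fin k → ZMod 2 => cylZ k a) := by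
  intro a b hab
  rw [Function.onFun, Set.disjoint_left]
  intro x hxa hxb
  exact hab (funext fun i => (hxa i).symm.trans (hxb i))

/-- The Haar probability measure on `∏_{n ∈ ℕ} ℤ/2ℤ` is ergodic for the group of
finitely supported translations: every Borel set that is invariant under translation by
every finitely supported element has Haar measure `0` or `1`. -/
theorem haar_ergodic_finitelySupportedTranslations
    (ν : Measure (ℕ → ZMod 2))
    (hν : ν = Measure.addHaarMeasure (⊤ : TopologicalSpace.PositiveCompacts (ℕ → ZMod 2)))
    (s : Set (ℕ → ZMod 2)) (hs : MeasurableSet s)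
    (hinv : ∀ e : ℕ → ZMod 2, (Function.support e).Finite →
      (fun x : ℕ → ZMod 2 => x + e) ⁻¹' s = s) :
    ν s = 0 ∨ ν s = 1 := by
  have hνuniv : ν Set.univ = 1 := by
    rw [hν, ← TopologicalSpace.PositiveCompacts.coe_top]
    exact Measure.addHaarMeasure_self
  haveI : IsProbabilityMeasure ν := ⟨hνuniv⟩
  haveI : ν.IsAddLeftInvariant := by rw [hν]; infer_instance
  haveI : ν.IsAddRightInvariant := by rw [hν]; infer_instance
  -- measure of every cylinder is independent of the values
  have hca : ∀ k (a b : Fin k → ZMod 2), ν (cylZ k a) = ν (cylZ k b) := by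
    intro k a b
    conv_rhs => rw [← cylZ_preimage k a b]
    rw [measure_preimage_add_right]
  -- measure of `s ∩ cylinder` is independent of the values
  have hsa : ∀ k (a b : Fin k → ZMod 2), ν (s ∩ cylZ k a) = ν (s ∩ cylZ k b) := by
    intro k a b
    conv_rhs => rw [← cylZ_preimage k a b,
      ← hinv (fun n => if h : n < k then a ⟨n, h⟩ - b ⟨n, h⟩ else 0) (cylZ_support k a b),
      ← Set.preimage_inter]
    rw [measure_preimage_add_right]
  -- key independence: ν (s ∩ C) = ν s * ν C for every cylinder C
  have hkey : ∀ k (a : Fin k → ZMod 2), ν (s ∩ cylZ k a) = ν s * ν (cylZ k a) := by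
    intro k a
    set N : ℝ≥0∞ := (Fintype.card (Fin k → ZMod 2) : ℝ≥0∞) with hN
    have hN0 : N ≠ 0 := by
      simp [hN, Fintype.card_ne_zero]
    have hNtop : N ≠ ⊤ := by simp [hN]
    have hsum1 : N * ν (cylZ k a) = 1 := by
      have : ν (⋃ b : Fin k → ZMod 2, cylZ k b) = ∑' b : Fin k → ZMod 2, ν (cylZ k b) :=
        measure_iUnion (cylZ_disjoint k) (fun b => cylZ_measurable k b)
      rw [cylZ_iUnion, hνuniv] at this
      rw [tsum_fintype] at this
      have h2 : ∑ b : Fin k → ZMod 2, ν (cylZ k a) = 1 := by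
        rw [this]; exact Finset.sum_congr rfl fun b _ => hca k a b
      rwa [Finset.sum_const, Finset.card_univ, nsmul_eq_mul] at h2
    have hsum2 : N * ν (s ∩ cylZ k a) = ν s := by
      have hd : Pairwise (Function.onFun Disjoint fun b : Fin k → ZMod 2 => s ∩ cylZ k b) :=
        fun b c hbc => ((cylZ_disjoint k hbc).mono (Set.inter_subset_right)
          (Set.inter_subset_right))
      have : ν (⋃ b : Fin k → ZMod 2, s ∩ cylZ k b) = ∑' b : Fin k → ZMod 2, ν (s ∩ cylZ k b) :=
        measure_iUnion hd (fun b => hs.inter (cylZ_measurable k b))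
      rw [← Set.inter_iUnion, cylZ_iUnion, Set.inter_univ, tsum_fintype] at this
      have h2 : ∑ b : Fin k → ZMod 2, ν (s ∩ cylZ k a) = ν s := by
        rw [this]; exact Finset.sum_congr rfl fun b _ => hsa k a b
      rwa [Finset.sum_const, Finset.card_univ, nsmul_eq_mul] at h2
    have hcalc : N * ν (s ∩ cylZ k a) = N * (ν s * ν (cylZ k a)) := by
      calc N * ν (s ∩ cylZ k a) = ν s := hsum2
        _ = ν s * (N * ν (cylZ k a)) := by rw [hsum1, mul_one]
        _ = N * (ν s * ν (cylZ k a)) := by ring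
    exact (ENNReal.mul_right_inj hN0 hNtop).mp hcalc
  -- π-system of cylinders generating the σ-algebra
  set P : Set (Set (ℕ → ZMod 2)) := {t | ∃ k a, t = cylZ k a} with hP
  have hPpi : IsPiSystem P := by
    rintro t1 ⟨k, a, rfl⟩ t2 ⟨l, b, rfl⟩ hne
    obtain ⟨x, hxa, hxb⟩ := hne
    refine ⟨max k l, fun i => x i, ?_⟩
    ext y
    simp only [Set.mem_inter_iff, cylZ, Set.mem_setOf_eq]
    constructor
    · rintro ⟨h1, h2⟩ i
      rcases Nat.lt_or_ge (i : ℕ) k with h | h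
      · exact (h1 ⟨i, h⟩).trans (hxa ⟨i, h⟩).symm
      · have hl : (i : ℕ) < l := by
          rcases Nat.lt_or_ge (i : ℕ) l with hl | hl
          · exact hl
          · exact absurd i.isLt (by omega)
        exact (h2 ⟨i, hl⟩).trans (hxb ⟨i, hl⟩).symm
    · intro h
      constructor
      · intro i
        have := h ⟨i, lt_of_lt_of_le i.isLt (le_max_left k l)⟩
        exact this.trans (hxa i)
      · intro i
        have := h ⟨i, lt_of_lt_of_le i.isLt (le_max_right k l)⟩
        exact this.trans (hxb i)
  have hgen : (inferInstance : MeasurableSpace (ℕ → ZMod 2)) = MeasurableSpace.generateFrom P := by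
    apply le_antisymm
    · -- pi ≤ generateFrom P
      rw [MeasurableSpace.pi]
      refine iSup_le fun n => ?_
      rw [MeasurableSpace.comap_le_iff_le_map]
      intro t _
      -- show eval n is measurable w.r.t. generateFrom P
      have : @Measurable _ _ (MeasurableSpace.generateFrom P) _
          (fun x : ℕ → ZMod 2 => x n) := by
        refine @measurable_to_countable' (ZMod 2) (ℕ → ZMod 2) _ _
          (MeasurableSpace.generateFrom P) _ fun v => ?_
        have : (fun x : ℕ → ZMod 2 => x n) ⁻¹' {v}
            = ⋃ a ∈ {a : Fin (n+1) → ZMod 2 | a ⟨n, n.lt_succ_self⟩ = v}, cylZ (n+1) a := by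
          ext x
          simp only [Set.mem_preimage, Set.mem_singleton_iff, Set.mem_iUnion, Set.mem_setOf_eq,
            cylZ]
          constructor
          · intro hx
            exact ⟨fun i => x i, hx, fun i => rfl⟩
          · rintro ⟨a, ha, hxa⟩
            rw [← ha]
            exact hxa ⟨n, n.lt_succ_self⟩
        rw [this]
        exact MeasurableSet.biUnion (Set.to_countable _)
          (fun a _ => MeasurableSpace.measurableSet_generateFrom ⟨n+1, a, rfl⟩)
      exact this trivial
    · rw [MeasurableSpace.generateFrom_le_iff]
      rintro t ⟨k, a, rfl⟩
      exact cylZ_measurable k a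
  -- use uniqueness of finite measures agreeing on π-system
  have hext : ν.restrict s = ν s • ν := by
    refine ext_of_generate_finite P hgen hPpi ?_ ?_
    · rintro t ⟨k, a, rfl⟩
      rw [Measure.restrict_apply (cylZ_measurable k a), Set.inter_comm, Measure.smul_apply,
        smul_eq_mul]
      exact hkey k a
    · rw [Measure.restrict_apply MeasurableSet.univ, Set.univ_inter, Measure.smul_apply,
        smul_eq_mul, hνuniv, mul_one]
  have hsq : ν s = ν s * ν s := by
    have := congrArg (fun μ : Measure (ℕ → ZMod 2) => μ s) hext
    simpa [Measure.restrict_apply hs, Set.inter_self] using this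
  rcases eq_or_ne (ν s) 0 with h0 | h0
  · exact Or.inl h0
  · right
    have hne : ν s ≠ ⊤ := (measure_lt_top ν s).ne
    have h1 : ν s * ν s = ν s * 1 := by rw [mul_one, ← hsq]
    exact (ENNReal.mul_right_inj h0 hne).mp h1
end

section
/- Let G = ⊕_{n ∈ ℕ} ℤ/2ℤ be the countable abelian group of finitely supported (ℤ/2ℤ)-valued sequences, and let X = (G → ℤ/2ℤ) with the product topology, on which G acts by translations (g • x)(h) = x(h + g). Then the set of ergodic G-invariant Borel probability measures on X is dense (in the topology of weak convergence) in the set of all G-invariant Borel probability measures on X; consequently the simplex of G-invariant measures is a Poulsen simplex. -/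
open MeasureTheory

/-- The translation action of `G = ⊕_{n ∈ ℕ} ℤ/2ℤ` (finitely supported sequences) on
`X = (G → ℤ/2ℤ)`: `(g • x) h = x (h + g)`. -/
noncomputable def bernoulliShift (g : ℕ →₀ ZMod 2) (x : (ℕ →₀ ZMod 2) → ZMod 2) :
    (ℕ →₀ ZMod 2) → ZMod 2 :=
  fun h => x (h + g)

/-!
Periodic points have finite orbits, and the uniform measure on a finite orbit is invariant and
ergodic. Write `G_n ≅ (ℤ/2)^n` for the sequences supported in `[0, n)`. For an invariant `μ`, the
law `p` of the `n`-window `x ↦ x|_{G_n}` is invariant under translation by `G_n`. Choose a map `Q`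
from `(ℤ/2)^m` to window patterns whose empirical distribution is `O(2^{-m})`-close to `p`, write
the pattern `Q c` on the coset of `G_n` in `G_{n+m}` indexed by `c`, and extend periodically in
the coordinates `≥ n + m`. The `n`-window law of the orbit measure of this point is the average
over `G_n`-translates of the empirical distribution of `Q`, hence close to the average of the
translates of `p`, which is `p`. Every continuous function on `X` is a uniform limit of functions
of the `n`-window, so these orbit measures converge weakly to `μ`.
-/

open Filter Topology
open scoped ENNReal BigOperators

section DiracAverage

variable {Ω Ω' K : Type*} [MeasurableSpace Ω] [MeasurableSpace Ω'] [Fintype K]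

noncomputable def diracAverage (z : K → Ω) : Measure Ω :=
  (Fintype.card K : ℝ≥0∞)⁻¹ • ∑ k, Measure.dirac (z k)

lemma diracAverage_apply (z : K → Ω) {s : Set Ω} (hs : MeasurableSet s) :
    diracAverage z s = (Fintype.card K : ℝ≥0∞)⁻¹ * ∑ k, s.indicator 1 (z k) := by
  simp [diracAverage, Measure.dirac_apply' _ hs]

instance [Nonempty K] (z : K → Ω) : IsProbabilityMeasure (diracAverage z) := by
  constructor
  simp [diracAverage_apply z MeasurableSet.univ, ENNReal.inv_mul_cancel]

lemma map_diracAverage {T : Ω → Ω'} (hT : Measurable T) (z : K → Ω) :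
    (diracAverage z).map T = diracAverage (T ∘ z) := by
  rw [diracAverage, diracAverage, Measure.map_smul, ← Measure.mapₗ_apply_of_measurable hT,
    map_sum]
  simp [Measure.mapₗ_apply_of_measurable hT, Measure.map_dirac' hT]

lemma diracAverage_comp_equiv (z : K → Ω) (σ : K ≃ K) :
    diracAverage (z ∘ σ) = diracAverage z := by
  simp only [diracAverage, Function.comp_apply, Equiv.sum_comp σ fun k => Measure.dirac (z k)]

lemma diracAverage_eq_zero_or_one (z : K → Ω) {s : Set Ω} (hs : MeasurableSet s)
    (h : ∀ k k', z k ∈ s → z k' ∈ s) : diracAverage z s = 0 ∨ diracAverage z s = 1 := by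
  rw [diracAverage_apply z hs]
  by_cases hin : ∃ k, z k ∈ s
  · obtain ⟨k, hk⟩ := hin
    have : Nonempty K := ⟨k⟩
    right
    simp [Set.indicator_of_mem (h k _ hk), ENNReal.inv_mul_cancel]
  · push Not at hin
    left
    simp [Set.indicator_of_notMem (hin _)]

lemma integral_diracAverage [MeasurableSingletonClass Ω] (z : K → Ω) (f : Ω → ℝ) :
    ∫ x, f x ∂diracAverage z = 𝔼 k, f (z k) := by
  rw [diracAverage, integral_smul_measure,
    integral_finsetSum_measure fun k _ => integrable_dirac enorm_lt_top,
    Fintype.expect_eq_sum_div_card]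
  simp [integral_dirac, div_eq_inv_mul]

end DiracAverage

lemma abs_integral_sub_integral_le {Ω : Type*} [MeasurableSpace Ω] {μ : Measure Ω}
    [IsProbabilityMeasure μ] {f g : Ω → ℝ} (hf : Integrable f μ) (hg : Integrable g μ) {ε : ℝ}
    (h : ∀ x, |f x - g x| ≤ ε) : |∫ x, f x ∂μ - ∫ x, g x ∂μ| ≤ ε := by
  rw [← integral_sub hf hg]
  simpa using norm_integral_le_of_norm_le_const (μ := μ) (f := fun x => f x - g x)
    (Eventually.of_forall h)

lemma integral_comp_eq_sum_measureReal {Ω K : Type*} [MeasurableSpace Ω] [MeasurableSpace K]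
    [Fintype K] [MeasurableSingletonClass K] {μ : Measure Ω} [IsFiniteMeasure μ] {φ : Ω → K}
    (hφ : Measurable φ) (u : K → ℝ) :
    ∫ x, u (φ x) ∂μ = ∑ k, μ.real (φ ⁻¹' {k}) * u k := by
  rw [← integral_map hφ.aemeasurable (measurable_of_finite u).aestronglyMeasurable,
    integral_fintype .of_finite]
  simp [map_measureReal_apply hφ (measurableSet_singleton _)]

theorem tendstoUniformly_comp_of_tendsto {α β ι : Type*} [TopologicalSpace α] [CompactSpace α]
    [UniformSpace β] {p : Filter ι} {r : ι → α → α}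
    (hr : ∀ x, Tendsto (Function.uncurry r) (p ×ˢ 𝓝 x) (𝓝 x)) {f : α → β}
    (hf : Continuous f) : TendstoUniformly (fun i => f ∘ r i) f p := by
  rw [← tendstoLocallyUniformly_iff_tendstoUniformly_of_compactSpace,
    tendstoLocallyUniformly_iff_filter]
  intro x
  rw [tendstoUniformlyOnFilter_iff_tendsto]
  refine Tendsto.mono_right ?_ (nhds_le_uniformity (f x))
  exact ((hf.tendsto x).comp tendsto_snd).prodMk_nhds ((hf.tendsto x).comp (hr x))

theorem exists_nat_sum_eq_abs_sub_le {K : Type*} [Fintype K] (p : K → ℝ) (hp0 : ∀ k, 0 ≤ p k)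
    (hp1 : ∑ k, p k = 1) (T : ℕ) :
    ∃ N : K → ℕ, ∑ k, N k = T ∧ ∑ k, |(N k : ℝ) - T * p k| ≤ 2 * Fintype.card K := by
  classical
  obtain ⟨k₀⟩ : Nonempty K := by
    by_contra hK
    simp [not_nonempty_iff.1 hK] at hp1
  set F : K → ℕ := fun k => ⌊T * p k⌋₊
  have hF_le (k : K) : (F k : ℝ) ≤ T * p k := Nat.floor_le (by positivity [hp0 k])
  have hF_gt (k : K) : T * p k - 1 < F k := Nat.sub_one_lt_floor _
  have hsum : ∑ k, (T * p k - F k) = T - ∑ k, (F k : ℝ) := by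
    simp [Finset.sum_sub_distrib, ← Finset.mul_sum, hp1]
  have hFT : ∑ k, F k ≤ T := by
    have : ∑ k, (F k : ℝ) ≤ T := by
      linarith [Finset.sum_nonneg fun k (_ : k ∈ Finset.univ) => sub_nonneg.2 (hF_le k)]
    exact_mod_cast this
  set D := T - ∑ k, F k
  have hD : (D : ℝ) = ∑ k, (T * p k - F k) := by
    rw [hsum, Nat.cast_sub hFT, Nat.cast_sum]
  have hD_le : (D : ℝ) ≤ Fintype.card K := by
    rw [hD]
    simpa using Finset.sum_le_sum fun k (_ : k ∈ Finset.univ) =>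
      (by linarith [hF_gt k] : T * p k - F k ≤ 1)
  -- round down, then give the deficit `D` to a single entry
  refine ⟨fun k => F k + if k = k₀ then D else 0, ?_, ?_⟩
  · simp only [Finset.sum_add_distrib, Finset.sum_ite_eq', Finset.mem_univ, if_true]
    omega
  calc ∑ k, |((F k + if k = k₀ then D else 0 : ℕ) : ℝ) - T * p k|
      ≤ ∑ k, ((T * p k - F k) + if k = k₀ then (D : ℝ) else 0) := by
        refine Finset.sum_le_sum fun k _ => abs_le.2 ?_
        split_ifs <;> push_cast <;> constructor <;>
          linarith [hF_le k, hF_gt k, D.cast_nonneg (α := ℝ)]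
    _ = 2 * D := by
        rw [Finset.sum_add_distrib, ← hD, Finset.sum_ite_eq']
        simp only [Finset.mem_univ, if_true]
        ring
    _ ≤ 2 * Fintype.card K := by linarith

theorem exists_expect_comp_sub_le {K C : Type*} [Fintype K] [Fintype C] [Nonempty C]
    (p : K → ℝ) (hp0 : ∀ k, 0 ≤ p k) (hp1 : ∑ k, p k = 1) :
    ∃ Q : C → K, ∀ (A : K → ℝ) (B : ℝ), (∀ k, |A k| ≤ B) →
      |𝔼 c, A (Q c) - ∑ k, p k * A k| ≤ B * (2 * Fintype.card K / Fintype.card C) := by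
  obtain ⟨N, hN, hNp⟩ := exists_nat_sum_eq_abs_sub_le p hp0 hp1 (Fintype.card C)
  have hcard : Fintype.card C = Fintype.card (Σ k, Fin (N k)) := by simp [hN]
  set e := Fintype.equivOfCardEq hcard
  refine ⟨fun c => (e c).1, fun A B hA => ?_⟩
  have hT : (0 : ℝ) < Fintype.card C := by exact_mod_cast Fintype.card_pos
  have hfib : 𝔼 c, A (e c).1 = ∑ k, (N k : ℝ) / Fintype.card C * A k := by
    rw [Fintype.expect_eq_sum_div_card, Equiv.sum_comp e fun x => A x.1, Fintype.sum_sigma,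
      Finset.sum_div]
    simp [div_mul_eq_mul_div]
  have hB : 0 ≤ B := (abs_nonneg _).trans (hA (e (Classical.arbitrary C)).1)
  calc |𝔼 c, A (e c).1 - ∑ k, p k * A k|
      = |(∑ k, ((N k : ℝ) - Fintype.card C * p k) * A k) / Fintype.card C| := by
        rw [hfib, ← Finset.sum_sub_distrib, Finset.sum_div]
        congr 1
        refine Finset.sum_congr rfl fun k _ => ?_
        field_simp
    _ ≤ (∑ k, |(N k : ℝ) - Fintype.card C * p k| * B) / Fintype.card C := by
        rw [abs_div, abs_of_pos hT]
        gcongr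
        refine (Finset.abs_sum_le_sum_abs _ _).trans (Finset.sum_le_sum fun k _ => ?_)
        rw [abs_mul]
        exact mul_le_mul_of_nonneg_left (hA k) (abs_nonneg _)
    _ ≤ B * (2 * Fintype.card K / Fintype.card C) := by
        rw [← Finset.sum_mul, mul_div_assoc', mul_comm B]
        gcongr

namespace BernoulliShift

abbrev X : Type := (ℕ →₀ ZMod 2) → ZMod 2

/-- Via `embed n`, `Block n` is the subgroup `G_n` of sequences supported in `[0, n)`; a
`Pattern n` is what a configuration looks like on `G_n`. -/
abbrev Block (n : ℕ) : Type := Fin n → ZMod 2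

abbrev Pattern (n : ℕ) : Type := Block n → ZMod 2

noncomputable def embed (n : ℕ) : Block n →+ (ℕ →₀ ZMod 2) :=
  (Finsupp.embDomain.addMonoidHom Fin.valEmbedding).comp
    (Finsupp.linearEquivFunOnFinite (ZMod 2) (ZMod 2) (Fin n)).symm.toLinearMap.toAddMonoidHom

noncomputable def restrict (n : ℕ) : (ℕ →₀ ZMod 2) →+ Block n where
  toFun h i := h i
  map_zero' := rfl
  map_add' _ _ := rfl

@[simp]
lemma restrict_apply (n : ℕ) (h : ℕ →₀ ZMod 2) (i : Fin n) : restrict n h i = h i := rfl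

lemma embed_apply_coe {n : ℕ} (v : Block n) (i : Fin n) : embed n v i = v i :=
  Finsupp.embDomain_apply_self Fin.valEmbedding _ i

lemma embed_apply_of_le {n : ℕ} (v : Block n) {i : ℕ} (hi : n ≤ i) : embed n v i = 0 := by
  simp only [embed, AddMonoidHom.comp_apply]
  exact Finsupp.embDomain_of_notMem_range _ _ _ (by simpa using hi)

@[simp]
lemma restrict_embed {n : ℕ} (v : Block n) : restrict n (embed n v) = v :=
  funext (embed_apply_coe v)

lemma embed_restrict {n : ℕ} {s : ℕ →₀ ZMod 2} (hs : s.support ⊆ Finset.range n) :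
    embed n (restrict n s) = s := by
  ext i
  by_cases hi : i < n
  · exact embed_apply_coe _ ⟨i, hi⟩
  · rw [embed_apply_of_le _ (not_lt.1 hi), eq_comm, ← Finsupp.notMem_support_iff]
    exact fun h => hi (Finset.mem_range.1 (hs h))

lemma restrict_embed_add_append {n m : ℕ} (v a : Block n) (c : Block m) :
    restrict (n + m) (embed n v) + Fin.append a c = Fin.append (v + a) c := by
  ext i
  refine Fin.addCases (fun i => ?_) (fun j => ?_) i
  · simp [embed_apply_coe]
  · simp [embed_apply_of_le]

lemma continuous_bernoulliShift (g : ℕ →₀ ZMod 2) : Continuous (bernoulliShift g) :=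
  continuous_pi fun h => continuous_apply (h + g)

lemma measurable_bernoulliShift (g : ℕ →₀ ZMod 2) : Measurable (bernoulliShift g) :=
  (continuous_bernoulliShift g).measurable

noncomputable def window (n : ℕ) (x : X) : Pattern n := fun v => x (embed n v)

noncomputable def periodize (n : ℕ) (y : Pattern n) : X := fun h => y (restrict n h)

def translate {n : ℕ} (a : Block n) (w : Pattern n) : Pattern n := fun v => w (v + a)

lemma measurable_window (n : ℕ) : Measurable (window n) :=
  measurable_pi_lambda _ fun _ => measurable_pi_apply _

lemma translate_translate {n : ℕ} (a b : Block n) (w : Pattern n) :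
    translate a (translate b w) = translate (a + b) w := by
  funext v
  simp only [translate, add_assoc]

lemma window_bernoulliShift_embed {n : ℕ} (a : Block n) (x : X) :
    window n (bernoulliShift (embed n a) x) = translate a (window n x) := by
  funext v
  simp [window, bernoulliShift, translate]

lemma bernoulliShift_periodize (g : ℕ →₀ ZMod 2) {n : ℕ} (y : Pattern n) :
    bernoulliShift g (periodize n y) = periodize n (translate (restrict n g) y) := by
  funext h
  simp [periodize, bernoulliShift, translate]

noncomputable def truncate (n : ℕ) : C(X, X) where
  toFun x := periodize n (window n x)
  continuous_toFun := continuous_pi fun _ => continuous_apply _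

lemma tendsto_truncate (x : X) :
    Tendsto (Function.uncurry fun n => truncate n) (atTop ×ˢ 𝓝 x) (𝓝 x) := by
  refine tendsto_pi_nhds.2 fun s => ?_
  obtain ⟨N, hN⟩ := Finset.exists_nat_subset_range s.support
  have hs : ∀ᶠ q : ℕ × X in atTop ×ˢ 𝓝 x, truncate q.1 q.2 s = q.2 s := by
    filter_upwards [(eventually_ge_atTop N).prod_inl (𝓝 x)] with q hq
    exact congrArg q.2 (embed_restrict (hN.trans (Finset.range_subset_range.2 hq)))
  exact Tendsto.congr' (EventuallyEq.symm hs) ((continuous_apply s).tendsto x |>.comp tendsto_snd)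

def ShiftInvariant (μ : Measure X) : Prop :=
  ∀ g : ℕ →₀ ZMod 2, μ.map (bernoulliShift g) = μ

def ShiftErgodic (μ : Measure X) : Prop :=
  ShiftInvariant μ ∧ ∀ s : Set X, MeasurableSet s →
    (∀ g : ℕ →₀ ZMod 2, bernoulliShift g ⁻¹' s = s) → μ s = 0 ∨ μ s = 1

lemma integral_translate_window {μ : Measure X} (hμ : ShiftInvariant μ) {n : ℕ}
    (u : Pattern n → ℝ) (a : Block n) :
    ∫ x, u (translate a (window n x)) ∂μ = ∫ x, u (window n x) ∂μ := by
  simp_rw [← window_bernoulliShift_embed]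
  conv_rhs => rw [← hμ (embed n a)]
  exact (integral_map (measurable_bernoulliShift _).aemeasurable
    ((measurable_of_countable u).comp (measurable_window n)).aestronglyMeasurable).symm

noncomputable def orbitMeasure {n : ℕ} (y : Pattern n) : Measure X :=
  diracAverage fun t : Block n => periodize n (translate t y)

instance {n : ℕ} (y : Pattern n) : IsProbabilityMeasure (orbitMeasure y) := by
  unfold orbitMeasure; infer_instance

lemma shiftErgodic_orbitMeasure {n : ℕ} (y : Pattern n) : ShiftErgodic (orbitMeasure y) := by
  have hshift (g : ℕ →₀ ZMod 2) (t : Block n) :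
      bernoulliShift g (periodize n (translate t y)) =
        periodize n (translate (restrict n g + t) y) := by
    rw [bernoulliShift_periodize, translate_translate]
  refine ⟨fun g => ?_, fun s hs hinv => diracAverage_eq_zero_or_one _ hs fun t t' ht => ?_⟩
  · rw [orbitMeasure, map_diracAverage (measurable_bernoulliShift g)]
    have : bernoulliShift g ∘ (fun t : Block n => periodize n (translate t y)) =
        (fun t : Block n => periodize n (translate t y)) ∘ Equiv.addLeft (restrict n g) :=
      funext (hshift g)
    rw [this, diracAverage_comp_equiv]
  · have horbit (t : Block n) : periodize n (translate t y) =
        bernoulliShift (embed n t) (periodize n (translate 0 y)) := by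
      rw [hshift, restrict_embed, add_zero]
    rw [horbit] at ht ⊢
    rwa [← Set.mem_preimage, hinv, ← hinv (embed n t), Set.mem_preimage]

/-- The pattern on `G_{n+m} ≅ G_n × (ℤ/2)^m` that reads `Q c` on the coset indexed by `c`. -/
def stack {n m : ℕ} (Q : Block m → Pattern n) : Pattern (n + m) :=
  fun t => Q ((Fin.appendEquiv n m).symm t).2 ((Fin.appendEquiv n m).symm t).1

lemma window_periodize_stack {n m : ℕ} (Q : Block m → Pattern n) (a : Block n) (c : Block m) :
    window n (periodize (n + m) (translate (Fin.append a c) (stack Q))) = translate a (Q c) := by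
  funext v
  simp [window, periodize, translate, stack, restrict_embed_add_append]
  rfl

theorem exists_orbitMeasure_window_approx (μ : Measure X) [IsProbabilityMeasure μ]
    (hμ : ShiftInvariant μ) (n m : ℕ) :
    ∃ y : Pattern (n + m), ∀ (u : Pattern n → ℝ) (B : ℝ), (∀ w, |u w| ≤ B) →
      |∫ x, u (window n x) ∂orbitMeasure y - ∫ x, u (window n x) ∂μ| ≤
        B * (2 * Fintype.card (Pattern n) / 2 ^ m) := by
  set p : Pattern n → ℝ := fun w => μ.real (window n ⁻¹' {w})
  have hp1 : ∑ w, p w = 1 := by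
    simpa using (integral_comp_eq_sum_measureReal (μ := μ) (measurable_window n) fun _ => 1).symm
  obtain ⟨Q, hQ⟩ := exists_expect_comp_sub_le (C := Block m) p (fun _ => measureReal_nonneg) hp1
  refine ⟨stack Q, fun u B hu => ?_⟩
  have hν : ∫ x, u (window n x) ∂orbitMeasure (stack Q) = 𝔼 a, 𝔼 c, u (translate a (Q c)) := by
    rw [orbitMeasure, integral_diracAverage, ← Finset.expect_product',
      Finset.univ_product_univ]
    exact (Fintype.expect_equiv (Fin.appendEquiv n m) _ _
      fun ac => congrArg u (window_periodize_stack Q ac.1 ac.2).symm).symm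
  have hμ' : ∫ x, u (window n x) ∂μ = 𝔼 a, ∑ w, p w * u (translate a w) := by
    calc ∫ x, u (window n x) ∂μ = 𝔼 _a : Block n, ∫ x, u (window n x) ∂μ :=
          (Fintype.expect_const _).symm
      _ = _ := Finset.expect_congr rfl fun a _ => by
          rw [← integral_translate_window hμ u a]
          exact integral_comp_eq_sum_measureReal (measurable_window n) (u ∘ translate a)
  rw [hν, hμ', ← Finset.expect_sub_distrib]
  refine (Finset.abs_expect_le _ _).trans (Finset.expect_le Finset.univ_nonempty fun a _ => ?_)
  simpa using hQ (fun w => u (translate a w)) B fun w => hu _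

theorem exists_shiftErgodic_window_approx (μ : Measure X) [IsProbabilityMeasure μ]
    (hμ : ShiftInvariant μ) (n : ℕ) {δ : ℝ} (hδ : 0 < δ) :
    ∃ ν : ProbabilityMeasure X, ShiftErgodic ν ∧ ∀ (u : Pattern n → ℝ) (B : ℝ),
      (∀ w, |u w| ≤ B) → |∫ x, u (window n x) ∂ν - ∫ x, u (window n x) ∂μ| ≤ B * δ := by
  obtain ⟨m, hm⟩ := pow_unbounded_of_one_lt (2 * Fintype.card (Pattern n) / δ) one_lt_two
  obtain ⟨y, hy⟩ := exists_orbitMeasure_window_approx μ hμ n m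
  refine ⟨⟨orbitMeasure y, inferInstance⟩, shiftErgodic_orbitMeasure y, fun u B hu => ?_⟩
  have hB : 0 ≤ B := (abs_nonneg _).trans (hu 0)
  refine (hy u B hu).trans (mul_le_mul_of_nonneg_left ?_ hB)
  rw [div_lt_iff₀ hδ, ← div_lt_iff₀' (by positivity)] at hm
  exact hm.le

theorem tendsto_of_window_integral_approx (μ : ProbabilityMeasure X)
    (ν : ℕ → ProbabilityMeasure X) {δ : ℕ → ℝ} (hδ : Tendsto δ atTop (𝓝 0))
    (h : ∀ n (u : Pattern n → ℝ) (B : ℝ), (∀ w, |u w| ≤ B) →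
      |∫ x, u (window n x) ∂ν n - ∫ x, u (window n x) ∂μ| ≤ B * δ n) :
    Tendsto ν atTop (𝓝 μ) := by
  rw [ProbabilityMeasure.tendsto_iff_forall_integral_tendsto]
  intro f
  rw [Metric.tendsto_nhds]
  intro ε hε
  have hunif := Metric.tendstoUniformly_iff.1
    (tendstoUniformly_comp_of_tendsto tendsto_truncate f.continuous) (ε / 3) (by positivity)
  have hsmall : ∀ᶠ n in atTop, ‖f‖ * δ n < ε / 3 :=
    (by simpa using hδ.const_mul ‖f‖ : Tendsto (fun n => ‖f‖ * δ n) atTop (𝓝 0)).eventually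
      (gt_mem_nhds (by positivity))
  filter_upwards [hunif, hsmall] with n hn hδn
  set g := f.compContinuous (truncate n)
  have hclose (ρ : ProbabilityMeasure X) : |∫ x, f x ∂ρ - ∫ x, g x ∂ρ| ≤ ε / 3 :=
    abs_integral_sub_integral_le (f.integrable ρ) (g.integrable ρ) fun x => (hn x).le
  have hwindow : |∫ x, g x ∂ν n - ∫ x, g x ∂μ| ≤ ‖f‖ * δ n :=
    h n (fun w => f (periodize n w)) ‖f‖ fun w => f.norm_coe_le_norm _
  rw [Real.dist_eq]
  have htri₁ := abs_sub_le (∫ x, f x ∂ν n) (∫ x, g x ∂ν n) (∫ x, f x ∂μ)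
  have htri₂ := abs_sub_le (∫ x, g x ∂ν n) (∫ x, g x ∂μ) (∫ x, f x ∂μ)
  have hμ_close := abs_sub_comm (∫ x, g x ∂μ) (∫ x, f x ∂μ) ▸ hclose μ
  linarith [hclose (ν n)]

end BernoulliShift

open BernoulliShift in
/-- For the translation action of `G = ⊕_{n ∈ ℕ} ℤ/2ℤ` on `X = (G → ℤ/2ℤ)` (with the
product topology), the ergodic `G`-invariant Borel probability measures are dense, in
the topology of weak convergence, in the set of all `G`-invariant Borel probability
measures; hence the simplex of invariant measures is a Poulsen simplex. -/
theorem ergodic_dense_in_invariant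
    (Inv Erg : Set (ProbabilityMeasure ((ℕ →₀ ZMod 2) → ZMod 2)))
    (hInv : Inv = {μ : ProbabilityMeasure ((ℕ →₀ ZMod 2) → ZMod 2) | ∀ g : ℕ →₀ ZMod 2,
      Measure.map (bernoulliShift g) (μ : Measure ((ℕ →₀ ZMod 2) → ZMod 2)) =
        (μ : Measure ((ℕ →₀ ZMod 2) → ZMod 2))})
    (hErg : Erg = {μ | μ ∈ Inv ∧ ∀ s : Set ((ℕ →₀ ZMod 2) → ZMod 2), MeasurableSet s →
      (∀ g : ℕ →₀ ZMod 2, bernoulliShift g ⁻¹' s = s) →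
      (μ : Measure ((ℕ →₀ ZMod 2) → ZMod 2)) s = 0 ∨
        (μ : Measure ((ℕ →₀ ZMod 2) → ZMod 2)) s = 1}) :
    Inv ⊆ closure Erg := by
  subst hInv hErg
  intro μ hμ
  choose ν hν_erg hν_approx using fun n : ℕ =>
    exists_shiftErgodic_window_approx μ hμ n (Nat.one_div_pos_of_nat (α := ℝ))
  exact mem_closure_of_tendsto
    (tendsto_of_window_integral_approx μ ν tendsto_one_div_add_atTop_nhds_zero_nat hν_approx)
    (Eventually.of_forall hν_erg)
end

section
/- Let G = ⊕_{n ∈ ℕ} ℤ/2ℤ be the countable abelian group of finitely supported (ℤ/2ℤ)-valued sequences, and let X = (G → ℤ/2ℤ) with the product topology, on which G acts by translations (g • x)(h) = x(h + g). Then the set of G-invariant Borel probability measures on X whose support is a finite set is dense (in the topology of weak convergence) in the set of all G-invariant Borel probability measures on X. -/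
open MeasureTheory

/-!
Let `coarsen n x := x ∘ truncate n`, where `truncate n g` forgets the coordinates of `g` at
indices `≥ n`. Since `truncate n` is additive with finite range, `coarsen n` has finite range and
intertwines the shift by `g` with the shift by `truncate n g`; hence it pushes an invariant `μ` to
an invariant, finitely supported measure. As `coarsen n → id` pointwise, these push-forwards
converge weakly to `μ` by dominated convergence.
-/

open Filter Set Topology

lemma Set.Finite.range_comp_right {α β γ : Type*} [Finite γ] {t : α → β}
    (ht : (range t).Finite) : (range fun x : β → γ ↦ x ∘ t).Finite := by
  have : Finite (range t) := ht.to_subtype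
  refine (finite_range fun y : range t → γ ↦ y ∘ rangeFactorization t).subset ?_
  rintro _ ⟨x, rfl⟩
  exact ⟨x ∘ Subtype.val, rfl⟩

lemma MeasureTheory.Measure.map_eq_of_semiconj {α β : Type*} [MeasurableSpace α]
    [MeasurableSpace β] {μ : Measure α} {P : α → β} {T' : α → α} {T : β → β}
    (hP : Measurable P) (hT' : Measurable T') (hT : Measurable T) (h : T ∘ P = P ∘ T')
    (hμ : μ.map T' = μ) : (μ.map P).map T = μ.map P := by
  rw [Measure.map_map hT hP, h, ← Measure.map_map hP hT', hμ]

lemma MeasureTheory.Measure.exists_finset_map_compl_eq_zero {α β : Type*} [MeasurableSpace α]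
    [MeasurableSpace β] [MeasurableSingletonClass β] (μ : Measure α) {f : α → β}
    (hf : (range f).Finite) : ∃ t : Finset β, μ.map f (↑t)ᶜ = 0 :=
  ⟨hf.toFinset, by
    rw [hf.coe_toFinset]
    exact ae_iff.mp (ae_map_mem_range f hf.measurableSet μ)⟩

lemma MeasureTheory.ProbabilityMeasure.tendsto_map_of_forall_tendsto {ι Ω : Type*}
    [MeasurableSpace Ω] [TopologicalSpace Ω] [OpensMeasurableSpace Ω]
    {l : Filter ι} [l.IsCountablyGenerated]
    (μ : ProbabilityMeasure Ω) {X : ι → Ω → Ω} (hX : ∀ i, Measurable (X i))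
    (h : ∀ ω, Tendsto (fun i ↦ X i ω) l (𝓝 ω)) :
    Tendsto (fun i ↦ μ.map (hX i).aemeasurable) l (𝓝 μ) := by
  have := (tendstoInDistribution_of_ae_tendsto (μ' := (μ : Measure Ω))
    (fun i ↦ (hX i).aemeasurable) aemeasurable_id (.of_forall h)).tendsto
  simp only [Measure.map_id] at this
  exact this

namespace Finsupp

noncomputable def truncate {M : Type*} [Zero M] (n : ℕ) (g : ℕ →₀ M) : ℕ →₀ M :=
  g.filter (· < n)

lemma truncate_add {M : Type*} [AddZeroClass M] (n : ℕ) (g h : ℕ →₀ M) :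
    truncate n (g + h) = truncate n g + truncate n h :=
  filter_add

lemma eventually_truncate_eq {M : Type*} [Zero M] (g : ℕ →₀ M) :
    ∀ᶠ n in atTop, truncate n g = g := by
  obtain ⟨N, hN⟩ := g.support.exists_nat_subset_range
  filter_upwards [eventually_ge_atTop N] with n hn
  refine (filter_eq_self_iff _ g).mpr fun i hi ↦ ?_
  exact (Finset.mem_range.mp (hN (mem_support_iff.mpr hi))).trans_le hn

lemma finite_range_truncate {M : Type*} [Zero M] [Finite M] (n : ℕ) :
    (range (truncate (M := M) n)).Finite := by
  refine Finite.of_finite_image (f := fun g (i : Fin n) ↦ g i) (toFinite _) ?_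
  rintro _ ⟨g, rfl⟩ _ ⟨h, rfl⟩ hgh
  ext i
  by_cases hi : i < n
  · simpa [truncate, filter_apply, hi] using congr_fun hgh ⟨i, hi⟩
  · simp [truncate, hi]

end Finsupp

open Finsupp

noncomputable def coarsen (n : ℕ) (x : (ℕ →₀ ZMod 2) → ZMod 2) :
    (ℕ →₀ ZMod 2) → ZMod 2 :=
  x ∘ truncate n

lemma measurable_bernoulliShift (g : ℕ →₀ ZMod 2) : Measurable (bernoulliShift g) :=
  measurable_pi_lambda _ fun _ ↦ measurable_pi_apply _

lemma measurable_coarsen (n : ℕ) : Measurable (coarsen n) :=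
  measurable_pi_lambda _ fun _ ↦ measurable_pi_apply _

lemma bernoulliShift_comp_coarsen (n : ℕ) (g : ℕ →₀ ZMod 2) :
    bernoulliShift g ∘ coarsen n = coarsen n ∘ bernoulliShift (truncate n g) := by
  ext x h
  simp [bernoulliShift, coarsen, truncate_add]

lemma finite_range_coarsen (n : ℕ) : (range (coarsen n)).Finite :=
  (finite_range_truncate n).range_comp_right

lemma tendsto_coarsen (x : (ℕ →₀ ZMod 2) → ZMod 2) :
    Tendsto (fun n ↦ coarsen n x) atTop (𝓝 x) :=
  tendsto_pi_nhds.mpr fun g ↦ tendsto_const_nhds.congr' <|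
    (eventually_truncate_eq g).mono fun n hn ↦ by simp [coarsen, hn]

/-- For the translation action of `G = ⊕_{n ∈ ℕ} ℤ/2ℤ` on `X = (G → ℤ/2ℤ)` (with the
product topology), the `G`-invariant Borel probability measures supported on a finite
set are dense, in the topology of weak convergence, in the set of all `G`-invariant
Borel probability measures. -/
theorem finitelySupported_dense_in_invariant
    (Inv FinSupp : Set (ProbabilityMeasure ((ℕ →₀ ZMod 2) → ZMod 2)))
    (hInv : Inv = {μ : ProbabilityMeasure ((ℕ →₀ ZMod 2) → ZMod 2) | ∀ g : ℕ →₀ ZMod 2,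
      Measure.map (bernoulliShift g) (μ : Measure ((ℕ →₀ ZMod 2) → ZMod 2)) =
        (μ : Measure ((ℕ →₀ ZMod 2) → ZMod 2))})
    (hFin : FinSupp = {μ | μ ∈ Inv ∧ ∃ t : Finset ((ℕ →₀ ZMod 2) → ZMod 2),
      (μ : Measure ((ℕ →₀ ZMod 2) → ZMod 2)) (↑t)ᶜ = 0}) :
    Inv ⊆ closure FinSupp := by
  subst hInv hFin
  intro μ hμ
  have hconv :=
    ProbabilityMeasure.tendsto_map_of_forall_tendsto μ measurable_coarsen tendsto_coarsen
  refine mem_closure_of_tendsto hconv (.of_forall fun n ↦ ?_)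
  rw [Set.mem_ofPred_eq, ProbabilityMeasure.toMeasure_map]
  exact ⟨fun g ↦ Measure.map_eq_of_semiconj (measurable_coarsen n)
      (measurable_bernoulliShift _) (measurable_bernoulliShift g)
      (bernoulliShift_comp_coarsen n g) (hμ _),
    Measure.exists_finset_map_compl_eq_zero _ (finite_range_coarsen n)⟩
end
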